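/- Let V be a de Vries algebra with dual filter space S_V. For any a, b ∈ V: a ≺ b if and only if the closure of â is contained in the downward closure (with respect to the specialization/inclusion order) of b̂. -/

import Mathlib

/-!
`F ∈ closure â` says exactly that every member of `F` meets `a`. If `a ≺ b`, such an `F` extends
to the concordant filter generated by `F` and `{d | a ≺ d}`, which contains `b`. If `a ⊀ b`, the
filter generated by `{dᶜ | d ≺ b}` is concordant and lies in `closure â`, yet no concordant
filter extending it contains `b`: such a filter would contain some `d ≺ b` together with `dᶜ`.
-/

/-- A de Vries algebra structure on a complete Boolean algebra `B`:
a subordination relation `prec` satisfying axioms (A1)-(A7). -/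
structure DeVries (B : Type*) [CompleteBooleanAlgebra B] where
  prec : B → B → Prop
  A1 : prec ⊤ ⊤
  A2 : ∀ {a b : B}, prec a b → a ≤ b
  A3 : ∀ {a b c d : B}, a ≤ b → prec b c → c ≤ d → prec a d
  A4 : ∀ {a b c : B}, prec a b → prec a c → prec a (b ⊓ c)
  A5 : ∀ {a b : B}, prec a b → prec bᶜ aᶜ
  A6 : ∀ {a c : B}, prec a c → ∃ b, prec a b ∧ prec b c
  A7 : ∀ {a : B}, a ≠ ⊥ → ∃ b, b ≠ ⊥ ∧ prec b a

variable {B : Type*} [CompleteBooleanAlgebra B]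

/-- A (proper) filter on `B`, as a set. -/
def IsProperFilter (F : Set B) : Prop :=
  ⊤ ∈ F ∧ ⊥ ∉ F ∧ (∀ a b : B, a ∈ F → a ≤ b → b ∈ F) ∧
    (∀ a b : B, a ∈ F → b ∈ F → a ⊓ b ∈ F)

/-- A concordant filter: a proper filter in which every element has a ≺-predecessor. -/
def Concordant (V : DeVries B) (F : Set B) : Prop :=
  IsProperFilter F ∧ ∀ a ∈ F, ∃ b ∈ F, V.prec b a

/-- The dual filter space: the set of concordant filters. -/
def SV (V : DeVries B) : Type _ := {F : Set B // Concordant V F}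

/-- Basic open set `â = {F : a ∈ F}`. -/
def hatt (V : DeVries B) (a : B) : Set (SV V) := {F : SV V | a ∈ F.1}

/-- The Stone-like topology on `SV V`, generated by the sets `â`. -/
instance instTopSV (V : DeVries B) : TopologicalSpace (SV V) :=
  TopologicalSpace.generateFrom {U : Set (SV V) | ∃ a : B, U = hatt V a}

/-- Downward closure under the inclusion (specialization) order of filters. -/
def dclF (V : DeVries B) (A : Set (SV V)) : Set (SV V) :=
  {F : SV V | ∃ G ∈ A, F.1 ⊆ G.1}

/-- Interior in the upset topology of the inclusion order: all extensions lie in `A`. -/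
def upIntF (V : DeVries B) (A : Set (SV V)) : Set (SV V) :=
  {F : SV V | ∀ G : SV V, F.1 ⊆ G.1 → G ∈ A}

namespace DeVries

variable (V : DeVries B)

lemma prec_top (a : B) : V.prec a ⊤ :=
  V.A3 le_top V.A1 le_rfl

lemma bot_prec (b : B) : V.prec ⊥ b :=
  V.A3 le_rfl (by simpa using V.A5 V.A1) bot_le

lemma sup_prec {a b c : B} (ha : V.prec a c) (hb : V.prec b c) : V.prec (a ⊔ b) c := by
  simpa using V.A5 (V.A4 (V.A5 ha) (V.A5 hb))

lemma inf_prec_inf {a b c d : B} (hac : V.prec a c) (hbd : V.prec b d) :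
    V.prec (a ⊓ b) (c ⊓ d) :=
  V.A4 (V.A3 inf_le_left hac le_rfl) (V.A3 inf_le_right hbd le_rfl)

end DeVries

section

variable {V : DeVries B}

namespace SV

lemma top_mem (F : SV V) : ⊤ ∈ F.1 := F.2.1.1

lemma mem_of_le (F : SV V) {a b : B} (ha : a ∈ F.1) (hab : a ≤ b) : b ∈ F.1 :=
  F.2.1.2.2.1 a b ha hab

lemma inf_mem (F : SV V) {a b : B} (ha : a ∈ F.1) (hb : b ∈ F.1) : a ⊓ b ∈ F.1 :=
  F.2.1.2.2.2 a b ha hb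

lemma inf_ne_bot (F : SV V) {a b : B} (ha : a ∈ F.1) (hb : b ∈ F.1) : a ⊓ b ≠ ⊥ :=
  fun h => F.2.1.2.1 (h ▸ F.inf_mem ha hb)

lemma exists_prec_mem (F : SV V) {a : B} (ha : a ∈ F.1) : ∃ b ∈ F.1, V.prec b a :=
  F.2.2 a ha

end SV

lemma concordant_upperClosure_of_prec_chain (g : ℕ → B) (hne : ∀ n, g n ≠ ⊥)
    (hg : ∀ n, V.prec (g (n + 1)) (g n)) : Concordant V {y | ∃ n, g n ≤ y} := by
  have hanti : Antitone g := antitone_nat_of_succ_le fun n => V.A2 (hg n)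
  refine ⟨⟨⟨0, le_top⟩, ?_, ?_, ?_⟩, ?_⟩
  · rintro ⟨n, hn⟩
    exact hne n (le_bot_iff.mp hn)
  · rintro u v ⟨n, hn⟩ huv
    exact ⟨n, hn.trans huv⟩
  · rintro u v ⟨n, hn⟩ ⟨m, hm⟩
    exact ⟨max n m, le_inf ((hanti (le_max_left n m)).trans hn)
      ((hanti (le_max_right n m)).trans hm)⟩
  · rintro u ⟨n, hn⟩
    exact ⟨g (n + 1), ⟨n + 1, le_rfl⟩, V.A3 le_rfl (hg n) hn⟩

/-- Iterating (A7) gives a descending `≺`-chain of nonzero elements starting at `x`. -/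
lemma SV.exists_mem_of_ne_bot {x : B} (hx : x ≠ ⊥) : ∃ F : SV V, x ∈ F.1 := by
  choose f hf_ne hf_prec using fun p : {y : B // y ≠ ⊥} => V.A7 p.2
  let g : ℕ → {y : B // y ≠ ⊥} := fun n => Nat.rec ⟨x, hx⟩ (fun _ p => ⟨f p, hf_ne p⟩) n
  exact ⟨⟨_, concordant_upperClosure_of_prec_chain (fun n => (g n).1) (fun n => (g n).2)
    (fun n => hf_prec (g n))⟩, 0, le_rfl⟩

lemma hatt_top : hatt V ⊤ = Set.univ :=
  Set.eq_univ_of_forall SV.top_mem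

lemma hatt_inf (a b : B) : hatt V (a ⊓ b) = hatt V a ∩ hatt V b := by
  ext F
  exact ⟨fun h => ⟨F.mem_of_le h inf_le_left, F.mem_of_le h inf_le_right⟩,
    fun h => F.inf_mem h.1 h.2⟩

lemma isTopologicalBasis_hatt :
    TopologicalSpace.IsTopologicalBasis {U : Set (SV V) | ∃ a : B, U = hatt V a} := by
  refine TopologicalSpace.isTopologicalBasis_of_subbasis_of_finiteInter rfl ⟨⟨⊤, hatt_top.symm⟩, ?_⟩
  rintro _ ⟨a, rfl⟩ _ ⟨b, rfl⟩
  exact ⟨a ⊓ b, (hatt_inf a b).symm⟩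

lemma mem_closure_hatt_iff {F : SV V} {a : B} :
    F ∈ closure (hatt V a) ↔ ∀ c ∈ F.1, a ⊓ c ≠ ⊥ := by
  rw [isTopologicalBasis_hatt.mem_closure_iff]
  constructor
  · rintro h c hc
    obtain ⟨G, hGc, hGa⟩ := h _ ⟨c, rfl⟩ hc
    exact G.inf_ne_bot hGa hGc
  · rintro h _ ⟨c, rfl⟩ hc
    obtain ⟨G, hG⟩ := SV.exists_mem_of_ne_bot (h c hc)
    exact ⟨G, G.mem_of_le hG inf_le_right, G.mem_of_le hG inf_le_left⟩

def extendByPrecUpset (V : DeVries B) (F : Set B) (a : B) : Set B :=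
  {y | ∃ c ∈ F, ∃ d, V.prec a d ∧ c ⊓ d ≤ y}

lemma concordant_extendByPrecUpset (F : SV V) {a : B} (hmeet : ∀ c ∈ F.1, a ⊓ c ≠ ⊥) :
    Concordant V (extendByPrecUpset V F.1 a) := by
  refine ⟨⟨⟨⊤, F.top_mem, ⊤, V.prec_top a, le_top⟩, ?_, ?_, ?_⟩, ?_⟩
  · rintro ⟨c, hc, d, had, hle⟩
    refine hmeet c hc (le_bot_iff.mp ?_)
    calc a ⊓ c ≤ c ⊓ d := inf_comm a c ▸ inf_le_inf_left c (V.A2 had)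
      _ ≤ ⊥ := hle
  · rintro u v ⟨c, hc, d, had, hle⟩ huv
    exact ⟨c, hc, d, had, hle.trans huv⟩
  · rintro u v ⟨c, hc, d, had, hle⟩ ⟨c', hc', d', had', hle'⟩
    refine ⟨c ⊓ c', F.inf_mem hc hc', d ⊓ d', V.A4 had had', ?_⟩
    calc c ⊓ c' ⊓ (d ⊓ d') = c ⊓ d ⊓ (c' ⊓ d') := by ac_rfl
      _ ≤ u ⊓ v := inf_le_inf hle hle'
  · rintro u ⟨c, hc, d, had, hle⟩
    obtain ⟨c', hc', hc'c⟩ := F.exists_prec_mem hc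
    obtain ⟨d', had', hd'd⟩ := V.A6 had
    exact ⟨c' ⊓ d', ⟨c', hc', d', had', le_rfl⟩, V.A3 le_rfl (V.inf_prec_inf hc'c hd'd) hle⟩

def complPrecFilter (V : DeVries B) (b : B) : Set B :=
  {c | ∃ d, V.prec d b ∧ dᶜ ≤ c}

lemma concordant_complPrecFilter {b : B} (hb : ¬ V.prec ⊤ b) :
    Concordant V (complPrecFilter V b) := by
  refine ⟨⟨⟨⊥, V.bot_prec b, le_top⟩, ?_, ?_, ?_⟩, ?_⟩
  · rintro ⟨d, hdb, hd⟩
    rw [le_bot_iff, compl_eq_bot] at hd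
    exact hb (hd ▸ hdb)
  · rintro u v ⟨d, hdb, hd⟩ huv
    exact ⟨d, hdb, hd.trans huv⟩
  · rintro u v ⟨d, hdb, hd⟩ ⟨d', hd'b, hd'⟩
    refine ⟨d ⊔ d', V.sup_prec hdb hd'b, ?_⟩
    rw [compl_sup]
    exact inf_le_inf hd hd'
  · rintro c ⟨d, hdb, hd⟩
    obtain ⟨m, hdm, hmb⟩ := V.A6 hdb
    exact ⟨mᶜ, ⟨m, hmb, le_rfl⟩, V.A3 le_rfl (V.A5 hdm) hd⟩

lemma inf_complPrecFilter_ne_bot {a b c : B} (hab : ¬ V.prec a b)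
    (hc : c ∈ complPrecFilter V b) : a ⊓ c ≠ ⊥ := by
  obtain ⟨d, hdb, hd⟩ := hc
  intro h
  have had : a ≤ d := by
    rw [← sdiff_eq_bot_iff, sdiff_eq]
    exact le_bot_iff.mp (h ▸ inf_le_inf_left a hd)
  exact hab (V.A3 had hdb le_rfl)

lemma notMem_of_complPrecFilter_subset {b : B} (G : SV V) (hG : complPrecFilter V b ⊆ G.1) :
    b ∉ G.1 := by
  intro hb
  obtain ⟨d, hd, hdb⟩ := G.exists_prec_mem hb
  simpa using G.inf_ne_bot hd (hG ⟨d, hdb, le_rfl⟩)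

end

theorem stmt7 (V : DeVries B) (a b : B) :
    V.prec a b ↔ closure (hatt V a) ⊆ dclF V (hatt V b) := by
  constructor
  · intro hab F hF
    let G : SV V := ⟨_, concordant_extendByPrecUpset F (mem_closure_hatt_iff.mp hF)⟩
    have hbG : b ∈ G.1 := ⟨⊤, F.top_mem, b, hab, inf_le_right⟩
    exact ⟨G, hbG, fun c hc => ⟨c, hc, b, hab, inf_le_left⟩⟩
  · intro h
    by_contra hab
    let F : SV V := ⟨_, concordant_complPrecFilter fun htop => hab (V.A3 le_top htop le_rfl)⟩
    have hF : F ∈ closure (hatt V a) :=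
      mem_closure_hatt_iff.mpr fun _ => inf_complPrecFilter_ne_bot hab
    obtain ⟨G, hbG, hFG⟩ := h hF
    exact notMem_of_complPrecFilter_subset G hFG hbG
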